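/- Assume the eigenvalues of Ã are pairwise distinct (λ̃_1 > ⋯ > λ̃_d) and λ̃_r > 0. Let Ψ ∈ ℝ^{r×r} be orthogonal and let X = O^B (Λ^B)^{-1/2} O^Ã_{:,{1,…,r}} Ψ. Then the null space {V ∈ ℝ^{d×r} : q_X(V) = 0} of the positive semidefinite Hessian of ℓ at X is a linear subspace of dimension r(r−1)/2 (equivalently, rank(H_X) = d·r − r(r−1)/2); it consists exactly of the matrices V = X S with S ∈ ℝ^{r×r} skew-symmetric. -/

import Mathlib

/-!
With `G = O^B (Λ^B)^{-1/2} O^Ã` one has `Gᵀ B G = 1` and `Gᵀ A G = Λ^Ã`, and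
`X = G E Ψ` where `E` consists of the first `r` columns of the identity. Since
`ℓ(G Y Ψ)` is the loss of the pair `(Λ^Ã, 1)` at `Y`, the substitution `V = G U Ψ` turns
`q_X(V)` into
  `2 ∑_{j ≤ r < k} (λ̃_j - λ̃_k) U_kj² + ∑_{i, j ≤ r} (λ̃_i + λ̃_j) (U_ij + U_ji)²`,
a sum of squares whose weights are positive because of the eigenvalue gaps and `λ̃_r > 0`.
It vanishes exactly when `U = E S` with `S` skew-symmetric, i.e. `V = X (Ψᵀ S Ψ)`. Left
multiplication by `X` is injective since `Xᵀ B X = 1`, so the null space has the dimension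
`r (r - 1) / 2` of the skew-symmetric `r × r` matrices.
-/

open Matrix

/-- `ℓ(X) = L(X, XᵀAX) = -2 tr(XᵀAX) + tr((XᵀAX)(XᵀBX))`. -/
noncomputable def gevEll (d r : ℕ) (A B : Matrix (Fin d) (Fin d) ℝ)
    (X : Matrix (Fin d) (Fin r) ℝ) : ℝ :=
  -2 * (Xᵀ * A * X).trace + ((Xᵀ * A * X) * (Xᵀ * B * X)).trace

/-- `q_X(V)`: the quadratic form of the Hessian `H_X` of `ℓ` at `X`, i.e. the second
derivative at `t = 0` of `t ↦ ℓ(X + tV)`. -/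
noncomputable def gevHessQuad (d r : ℕ) (A B : Matrix (Fin d) (Fin d) ℝ)
    (X V : Matrix (Fin d) (Fin r) ℝ) : ℝ :=
  iteratedDeriv 2 (fun t : ℝ => gevEll d r A B (X + t • V)) 0

open Finset

lemma iteratedDeriv_two_quartic_zero (c₀ c₁ c₂ c₃ c₄ : ℝ) :
    iteratedDeriv 2 (fun t : ℝ => c₀ + c₁ * t + c₂ * t ^ 2 + c₃ * t ^ 3 + c₄ * t ^ 4) 0
      = 2 * c₂ := by
  simp (discharger := fun_prop) [iteratedDeriv_fun_add, iteratedDeriv_const_mul_field,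
    iteratedDeriv_const, iteratedDeriv_succ, mul_comm]

lemma iteratedDeriv_two_trace_quadratic_zero {n : Type*} [Fintype n]
    (a₀ a₁ a₂ b₀ b₁ b₂ : Matrix n n ℝ) :
    iteratedDeriv 2 (fun t : ℝ => -2 * (a₀ + t • a₁ + t ^ 2 • a₂).trace
        + ((a₀ + t • a₁ + t ^ 2 • a₂) * (b₀ + t • b₁ + t ^ 2 • b₂)).trace) 0
      = 2 * (-2 * a₂.trace + (a₀ * b₂).trace + (a₁ * b₁).trace + (a₂ * b₀).trace) := by
  have hquartic : ∀ t : ℝ, -2 * (a₀ + t • a₁ + t ^ 2 • a₂).trace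
        + ((a₀ + t • a₁ + t ^ 2 • a₂) * (b₀ + t • b₁ + t ^ 2 • b₂)).trace
      = (-2 * a₀.trace + (a₀ * b₀).trace)
        + (-2 * a₁.trace + (a₀ * b₁).trace + (a₁ * b₀).trace) * t
        + (-2 * a₂.trace + (a₀ * b₂).trace + (a₁ * b₁).trace + (a₂ * b₀).trace) * t ^ 2
        + ((a₁ * b₂).trace + (a₂ * b₁).trace) * t ^ 3 + (a₂ * b₂).trace * t ^ 4 := by
    intro t
    simp only [Matrix.add_mul, Matrix.mul_add, Matrix.smul_mul, Matrix.mul_smul, trace_add,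
      trace_smul, smul_eq_mul]
    ring
  simp only [hquartic, iteratedDeriv_two_quartic_zero]

lemma transpose_mul_mul_add_smul {m n : Type*} [Fintype m] (A : Matrix m m ℝ)
    (X V : Matrix m n ℝ) (t : ℝ) :
    (X + t • V)ᵀ * A * (X + t • V)
      = Xᵀ * A * X + t • (Xᵀ * A * V + Vᵀ * A * X) + t ^ 2 • (Vᵀ * A * V) := by
  simp only [transpose_add, transpose_smul, Matrix.add_mul, Matrix.mul_add, Matrix.smul_mul,
    Matrix.mul_smul, smul_add, smul_smul]
  module

lemma trace_diagonal_mul_sub_trace {m n : Type*} [Fintype m] [Fintype n] [DecidableEq m]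
    [DecidableEq n] (c : n → ℝ) (lam : m → ℝ) (U : Matrix m n ℝ) :
    (diagonal c * (Uᵀ * U)).trace - (Uᵀ * diagonal lam * U).trace
      = ∑ j, ∑ k, (c j - lam k) * U k j ^ 2 := by
  simp only [trace, Matrix.diag, mul_apply, diagonal_apply, ite_mul, mul_ite, zero_mul, mul_zero,
    sum_ite_eq, sum_ite_eq', mem_univ, if_true, transpose_apply]
  simp only [mul_sum, ← sum_sub_distrib]
  exact sum_congr rfl fun j _ => sum_congr rfl fun k _ => by ring

lemma sum_sum_eq_of_add_swap {n : Type*} [Fintype n] {f g : n → n → ℝ}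
    (h : ∀ i j, f i j + f j i = g i j + g j i) : ∑ i, ∑ j, f i j = ∑ i, ∑ j, g i j := by
  have hsymm : ∀ F : n → n → ℝ, ∑ i, ∑ j, F i j = (∑ i, ∑ j, (F i j + F j i)) / 2 := by
    intro F
    simp only [sum_add_distrib]
    rw [sum_comm (f := fun i j => F j i)]
    ring
  rw [hsymm f, hsymm g]
  simp only [h]

lemma sum_sub_mul_sq_add_trace {n : Type*} [Fintype n] [DecidableEq n] (c : n → ℝ)
    (W : Matrix n n ℝ) :
    ∑ i, ∑ j, (c j - c i) * W i j ^ 2 + ((diagonal c * W + Wᵀ * diagonal c) * (W + Wᵀ)).trace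
      = ∑ i, ∑ j, (c i + c j) / 2 * (W i j + W j i) ^ 2 := by
  simp only [trace, Matrix.diag, mul_apply, Matrix.add_apply, diagonal_apply, ite_mul, mul_ite,
    zero_mul, mul_zero, sum_ite_eq, sum_ite_eq', mem_univ, if_true, transpose_apply,
    ← sum_add_distrib]
  exact sum_sum_eq_of_add_swap fun i j => by ring

lemma sum_sum_mul_sq_eq_zero_iff {ι κ : Type*} {s : Finset ι} {t : Finset κ}
    {w x : ι → κ → ℝ} (hw : ∀ i ∈ s, ∀ j ∈ t, 0 < w i j) :
    ∑ i ∈ s, ∑ j ∈ t, w i j * x i j ^ 2 = 0 ↔ ∀ i ∈ s, ∀ j ∈ t, x i j = 0 := by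
  have hnonneg : ∀ i ∈ s, ∀ j ∈ t, 0 ≤ w i j * x i j ^ 2 :=
    fun i hi j hj => mul_nonneg (hw i hi j hj).le (sq_nonneg _)
  rw [sum_eq_zero_iff_of_nonneg fun i hi => sum_nonneg (hnonneg i hi)]
  refine forall₂_congr fun i hi => ?_
  rw [sum_eq_zero_iff_of_nonneg (hnonneg i hi)]
  refine forall₂_congr fun j hj => ?_
  simp [(hw i hi j hj).ne']

section SubmatrixOne

variable {m n p : Type*} [Fintype m] [DecidableEq m]

lemma submatrix_one_transpose_mul (e : n → m) (M : Matrix m p ℝ) :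
    ((1 : Matrix m m ℝ).submatrix id e)ᵀ * M = M.submatrix e id := by
  ext i j
  simp [mul_apply, one_apply]

lemma mul_submatrix_one_id (e : n → m) (M : Matrix p m ℝ) :
    M * (1 : Matrix m m ℝ).submatrix id e = M.submatrix id e := by
  simpa using mul_submatrix_one (Equiv.refl m) e M

lemma submatrix_one_transpose_mul_self [DecidableEq n] (e : n ↪ m) :
    ((1 : Matrix m m ℝ).submatrix id e)ᵀ * (1 : Matrix m m ℝ).submatrix id e = 1 := by
  rw [submatrix_one_transpose_mul, submatrix_submatrix]
  exact submatrix_one_embedding e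

variable [Fintype n]

lemma sum_eq_sum_add_sum_compl_map (e : n ↪ m) (f : m → ℝ) :
    ∑ k, f k = ∑ i, f (e i) + ∑ k ∈ (univ.map e)ᶜ, f k := by
  rw [← sum_map univ e f, sum_add_sum_compl]

lemma exists_skew_eq_submatrix_one_mul_iff (e : n ↪ m) (U : Matrix m n ℝ) :
    (∃ S : Matrix n n ℝ, Sᵀ = -S ∧ U = (1 : Matrix m m ℝ).submatrix id e * S)
      ↔ (∀ j, ∀ k ∈ (univ.map e)ᶜ, U k j = 0) ∧ ∀ i j, U (e i) j + U (e j) i = 0 := by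
  have hrange : ∀ (S : Matrix n n ℝ) i j,
      ((1 : Matrix m m ℝ).submatrix id e * S) (e i) j = S i j := by
    intro S i j
    classical
    simp [mul_apply, one_apply, e.injective.eq_iff]
  have hcompl : ∀ (S : Matrix n n ℝ), ∀ k ∈ (univ.map e)ᶜ, ∀ j,
      ((1 : Matrix m m ℝ).submatrix id e * S) k j = 0 := by
    intro S k hk j
    simp only [mem_compl, mem_map, mem_univ, true_and, not_exists] at hk
    simp [mul_apply, one_apply, fun i => Ne.symm (hk i)]
  constructor
  · rintro ⟨S, hS, rfl⟩
    refine ⟨fun j k hk => hcompl S k hk j, fun i j => ?_⟩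
    have hij : S i j = -S j i := congrFun (congrFun hS j) i
    rw [hrange, hrange, hij, neg_add_cancel]
  · rintro ⟨hzero, hskew⟩
    refine ⟨U.submatrix e id, ?_, ?_⟩
    · ext i j
      simp only [transpose_apply, submatrix_apply, id, Matrix.neg_apply]
      linarith [hskew i j]
    · ext k j
      by_cases hk : k ∈ univ.map e
      · obtain ⟨i, -, rfl⟩ := mem_map.mp hk
        rw [hrange, submatrix_apply, id]
      · rw [hcompl _ k (mem_compl.mpr hk), hzero j k (mem_compl.mpr hk)]

lemma transpose_mul_mul_submatrix_one_eq_one [DecidableEq n] {B G : Matrix m m ℝ}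
    (hGB : Gᵀ * B * G = 1) (e : n ↪ m) {Ψ : Matrix n n ℝ} (hΨ : Ψᵀ * Ψ = 1) :
    (G * (1 : Matrix m m ℝ).submatrix id e * Ψ)ᵀ * B * (G * (1 : Matrix m m ℝ).submatrix id e * Ψ)
      = 1 := by
  calc _ = Ψᵀ * (((1 : Matrix m m ℝ).submatrix id e)ᵀ * (Gᵀ * B * G)
        * (1 : Matrix m m ℝ).submatrix id e) * Ψ := by
        simp only [transpose_mul, Matrix.mul_assoc]
    _ = 1 := by rw [hGB, Matrix.mul_one, submatrix_one_transpose_mul_self, Matrix.mul_one, hΨ]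

end SubmatrixOne

lemma exists_skew_mul_conj_iff {m n : Type*} [Fintype m] [Fintype n] [DecidableEq m]
    [DecidableEq n] {L G : Matrix m m ℝ} (hLG : L * G = 1) {Ψ : Matrix n n ℝ} (hΨ : Ψᵀ * Ψ = 1)
    (U M : Matrix m n ℝ) :
    (∃ S : Matrix n n ℝ, Sᵀ = -S ∧ G * U * Ψ = G * M * Ψ * S)
      ↔ ∃ S : Matrix n n ℝ, Sᵀ = -S ∧ U = M * S := by
  have hΨ' : Ψ * Ψᵀ = 1 := mul_eq_one_comm.mp hΨ
  constructor
  · rintro ⟨S, hS, hU⟩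
    refine ⟨Ψ * S * Ψᵀ, by simp [transpose_mul, hS, Matrix.mul_assoc], ?_⟩
    calc U = L * G * U * (Ψ * Ψᵀ) := by rw [hLG, hΨ', Matrix.one_mul, Matrix.mul_one]
      _ = L * (G * U * Ψ) * Ψᵀ := by simp only [Matrix.mul_assoc]
      _ = L * G * M * (Ψ * S * Ψᵀ) := by rw [hU]; simp only [Matrix.mul_assoc]
      _ = M * (Ψ * S * Ψᵀ) := by rw [hLG, Matrix.one_mul]
  · rintro ⟨S, hS, rfl⟩
    refine ⟨Ψᵀ * S * Ψ, by simp [transpose_mul, hS, Matrix.mul_assoc], ?_⟩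
    simp only [Matrix.mul_assoc, ← Matrix.mul_assoc Ψ Ψᵀ, hΨ', Matrix.one_mul]

lemma mem_skewAdjointMatricesSubmodule_one {R n : Type*} [CommRing R] [Fintype n]
    [DecidableEq n] {S : Matrix n n R} :
    S ∈ skewAdjointMatricesSubmodule (1 : Matrix n n R) ↔ Sᵀ = -S := by
  simp [Matrix.IsSkewAdjoint, Matrix.IsAdjointPair]

section SkewSymmetric

variable {K n : Type*} [Field K] [CharZero K] [Fintype n] [DecidableEq n] [LinearOrder n]

def skewAdjointMatricesSubmoduleOneEquivUpper :
    skewAdjointMatricesSubmodule (1 : Matrix n n K) ≃ₗ[K] ({p : n × n // p.1 < p.2} → K) where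
  toFun S p := (S : Matrix n n K) p.1.1 p.1.2
  map_add' _ _ := rfl
  map_smul' _ _ := rfl
  invFun f := ⟨of fun i j =>
      if h : i < j then f ⟨(i, j), h⟩ else if h' : j < i then -f ⟨(j, i), h'⟩ else 0, by
    rw [mem_skewAdjointMatricesSubmodule_one]
    ext i j
    rcases lt_trichotomy i j with h | rfl | h
    · simp [h, not_lt_of_gt h]
    · simp
    · simp [h, not_lt_of_gt h]⟩
  left_inv S := by
    have hS : ∀ i j, (S : Matrix n n K) j i = -(S : Matrix n n K) i j := fun i j =>
      congrFun (congrFun (mem_skewAdjointMatricesSubmodule_one.mp S.2) i) j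
    ext i j
    rcases lt_trichotomy i j with h | rfl | h
    · simp [h]
    · simpa using (self_eq_neg.mp (hS i i)).symm
    · simp [h, not_lt_of_gt h, hS j i]
  right_inv f := by
    funext p
    simp [p.2]

lemma finrank_skewAdjointMatricesSubmodule_one :
    Module.finrank K (skewAdjointMatricesSubmodule (1 : Matrix n n K))
      = (Fintype.card n).choose 2 := by
  rw [skewAdjointMatricesSubmoduleOneEquivUpper.finrank_eq, Module.finrank_fintype_fun_eq_card,
    Fintype.card_subtype, Fintype.card_product_filter_lt]

lemma finrank_map_mulLeftLinearMap_skewAdjointMatricesSubmodule_one {m : Type*} [Fintype m]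
    {L : Matrix n m K} {X : Matrix m n K} (hLX : L * X = 1) :
    Module.finrank K ((skewAdjointMatricesSubmodule (1 : Matrix n n K)).map
      (mulLeftLinearMap n K X)) = (Fintype.card n).choose 2 := by
  have hinj : Function.Injective (mulLeftLinearMap n K X) := fun S S' h => by
    simpa [← Matrix.mul_assoc, hLX] using congrArg (L * ·) h
  rw [← (Submodule.equivMapOfInjective _ hinj _).finrank_eq,
    finrank_skewAdjointMatricesSubmodule_one]

end SkewSymmetric

section Whitening

variable {n : Type*} [Fintype n] [DecidableEq n] {O O' : Matrix n n ℝ}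

lemma transpose_mul_mul_eq_diagonal_of_conj {A : Matrix n n ℝ} {c lam : n → ℝ} (hO' : O'ᵀ * O' = 1)
    (hA : diagonal c * Oᵀ * A * O * diagonal c = O' * diagonal lam * O'ᵀ) :
    (O * diagonal c * O')ᵀ * A * (O * diagonal c * O') = diagonal lam := by
  calc (O * diagonal c * O')ᵀ * A * (O * diagonal c * O')
      = O'ᵀ * (diagonal c * Oᵀ * A * O * diagonal c) * O' := by
        simp only [transpose_mul, diagonal_transpose, Matrix.mul_assoc]
    _ = diagonal lam := by
        rw [hA, Matrix.mul_assoc, Matrix.mul_assoc, hO', Matrix.mul_one, ← Matrix.mul_assoc, hO',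
          Matrix.one_mul]

lemma transpose_mul_mul_eq_one_of_eigendecomposition {B : Matrix n n ℝ} {μ : n → ℝ}
    (hO : Oᵀ * O = 1) (hO' : O'ᵀ * O' = 1) (hμ : ∀ k, 0 < μ k) (hB : B = O * diagonal μ * Oᵀ) :
    (O * diagonal (fun k => (√(μ k))⁻¹) * O')ᵀ * B
      * (O * diagonal (fun k => (√(μ k))⁻¹) * O') = 1 := by
  have hunit : (fun k => (√(μ k))⁻¹ * μ k * (√(μ k))⁻¹) = fun _ => 1 := by
    funext k
    have hne : √(μ k) ≠ 0 := (Real.sqrt_pos.mpr (hμ k)).ne'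
    field_simp
    exact (Real.sq_sqrt (hμ k).le).symm
  calc (O * diagonal (fun k => (√(μ k))⁻¹) * O')ᵀ * B * (O * diagonal (fun k => (√(μ k))⁻¹) * O')
      = O'ᵀ * (diagonal (fun k => (√(μ k))⁻¹) * (Oᵀ * O) * diagonal μ * (Oᵀ * O)
          * diagonal (fun k => (√(μ k))⁻¹)) * O' := by
        rw [hB]
        simp only [transpose_mul, diagonal_transpose, Matrix.mul_assoc]
    _ = 1 := by
        rw [hO, Matrix.mul_one, Matrix.mul_one, diagonal_mul_diagonal, diagonal_mul_diagonal, hunit,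
          diagonal_one, Matrix.mul_one, hO']

end Whitening

section Loss

variable {d r : ℕ}

lemma gevHessQuad_eq (A B : Matrix (Fin d) (Fin d) ℝ) (X V : Matrix (Fin d) (Fin r) ℝ) :
    gevHessQuad d r A B X V = 2 * (-2 * (Vᵀ * A * V).trace + (Xᵀ * A * X * (Vᵀ * B * V)).trace
      + ((Xᵀ * A * V + Vᵀ * A * X) * (Xᵀ * B * V + Vᵀ * B * X)).trace
      + (Vᵀ * A * V * (Xᵀ * B * X)).trace) := by
  simp only [gevHessQuad, gevEll, transpose_mul_mul_add_smul]
  exact iteratedDeriv_two_trace_quadratic_zero ..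

lemma gevEll_mul_mul (A B G : Matrix (Fin d) (Fin d) ℝ) (Y : Matrix (Fin d) (Fin r) ℝ)
    {Ψ : Matrix (Fin r) (Fin r) ℝ} (hΨ : Ψ * Ψᵀ = 1) :
    gevEll d r A B (G * Y * Ψ) = gevEll d r (Gᵀ * A * G) (Gᵀ * B * G) Y := by
  have hconj : ∀ C : Matrix (Fin d) (Fin d) ℝ,
      (G * Y * Ψ)ᵀ * C * (G * Y * Ψ) = Ψᵀ * (Yᵀ * (Gᵀ * C * G) * Y) * Ψ := by
    intro C
    simp only [transpose_mul, Matrix.mul_assoc]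
  have htrace : ∀ M : Matrix (Fin r) (Fin r) ℝ, (Ψᵀ * M * Ψ).trace = M.trace := by
    intro M
    rw [trace_mul_comm, ← Matrix.mul_assoc, hΨ, Matrix.one_mul]
  have hprod : ∀ M N : Matrix (Fin r) (Fin r) ℝ,
      Ψᵀ * M * Ψ * (Ψᵀ * N * Ψ) = Ψᵀ * (M * N) * Ψ := by
    intro M N
    simp only [Matrix.mul_assoc, ← Matrix.mul_assoc Ψ Ψᵀ, hΨ, Matrix.one_mul]
  simp only [gevEll, hconj, hprod, htrace]

lemma gevHessQuad_mul_mul (A B G : Matrix (Fin d) (Fin d) ℝ) (Y W : Matrix (Fin d) (Fin r) ℝ)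
    {Ψ : Matrix (Fin r) (Fin r) ℝ} (hΨ : Ψ * Ψᵀ = 1) :
    gevHessQuad d r A B (G * Y * Ψ) (G * W * Ψ)
      = gevHessQuad d r (Gᵀ * A * G) (Gᵀ * B * G) Y W := by
  have hline : ∀ t : ℝ, G * Y * Ψ + t • (G * W * Ψ) = G * (Y + t • W) * Ψ := by
    intro t
    simp only [Matrix.mul_add, Matrix.add_mul, Matrix.mul_smul, Matrix.smul_mul]
  simp only [gevHessQuad, hline, gevEll_mul_mul _ _ _ _ hΨ]

lemma gevHessQuad_diagonal_one (lam : Fin d → ℝ) (e : Fin r ↪ Fin d)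
    (U : Matrix (Fin d) (Fin r) ℝ) :
    gevHessQuad d r (diagonal lam) 1 ((1 : Matrix (Fin d) (Fin d) ℝ).submatrix id e) U
      = 2 * (∑ j, ∑ k ∈ (univ.map e)ᶜ, (lam (e j) - lam k) * U k j ^ 2
        + ∑ i, ∑ j, (lam (e i) + lam (e j)) / 2 * (U (e i) j + U (e j) i) ^ 2) := by
  set E := (1 : Matrix (Fin d) (Fin d) ℝ).submatrix id e
  set W := U.submatrix e id
  have hEU : Eᵀ * U = W := submatrix_one_transpose_mul e U
  have hUE : Uᵀ * E = Wᵀ := mul_submatrix_one_id e Uᵀ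
  have hEE : Eᵀ * E = 1 := submatrix_one_transpose_mul_self e
  have hEΛ : Eᵀ * diagonal lam = (diagonal lam).submatrix e id :=
    submatrix_one_transpose_mul e _
  have hEΛU : Eᵀ * diagonal lam * U = diagonal (lam ∘ e) * W := by
    ext i j
    simp [hEΛ, W, mul_apply, diagonal_apply]
  have hUΛE : Uᵀ * diagonal lam * E = Wᵀ * diagonal (lam ∘ e) := by
    simpa [Matrix.mul_assoc] using congrArg transpose hEΛU
  have hEΛE : Eᵀ * diagonal lam * E = diagonal (lam ∘ e) := by
    rw [hEΛ, mul_submatrix_one_id, submatrix_submatrix]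
    exact submatrix_diagonal_embedding lam e
  have hsplit : (diagonal (lam ∘ e) * (Uᵀ * U)).trace - (Uᵀ * diagonal lam * U).trace
      = ∑ i, ∑ j, (lam (e j) - lam (e i)) * U (e i) j ^ 2
        + ∑ j, ∑ k ∈ (univ.map e)ᶜ, (lam (e j) - lam k) * U k j ^ 2 := by
    rw [trace_diagonal_mul_sub_trace,
      sum_comm (f := fun i j => (lam (e j) - lam (e i)) * U (e i) j ^ 2), ← sum_add_distrib]
    exact sum_congr rfl fun j _ => sum_eq_sum_add_sum_compl_map e _
  have hsymm : ∑ i, ∑ j, (lam (e j) - lam (e i)) * U (e i) j ^ 2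
      + ((diagonal (lam ∘ e) * W + Wᵀ * diagonal (lam ∘ e)) * (W + Wᵀ)).trace
      = ∑ i, ∑ j, (lam (e i) + lam (e j)) / 2 * (U (e i) j + U (e j) i) ^ 2 :=
    sum_sub_mul_sq_add_trace (lam ∘ e) W
  rw [gevHessQuad_eq]
  simp only [Matrix.mul_one, hEΛE, hEΛU, hUΛE, hEU, hUE, hEE]
  linarith

lemma gevHessQuad_diagonal_one_eq_zero_iff {lam : Fin d → ℝ} {e : Fin r ↪ Fin d}
    (hgap : ∀ j, ∀ k ∉ Set.range e, lam k < lam (e j)) (hpos : ∀ i, 0 < lam (e i))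
    (U : Matrix (Fin d) (Fin r) ℝ) :
    gevHessQuad d r (diagonal lam) 1 ((1 : Matrix (Fin d) (Fin d) ℝ).submatrix id e) U = 0
      ↔ ∃ S : Matrix (Fin r) (Fin r) ℝ,
          Sᵀ = -S ∧ U = (1 : Matrix (Fin d) (Fin d) ℝ).submatrix id e * S := by
  have hw₁ : ∀ j ∈ univ, ∀ k ∈ (univ.map e)ᶜ, 0 < lam (e j) - lam k := by
    intro j _ k hk
    exact sub_pos.mpr (hgap j k (by simpa using hk))
  have hw₂ : ∀ i ∈ univ, ∀ j ∈ univ, 0 < (lam (e i) + lam (e j)) / 2 :=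
    fun i _ j _ => by linarith [hpos i, hpos j]
  rw [exists_skew_eq_submatrix_one_mul_iff, gevHessQuad_diagonal_one, mul_eq_zero,
    or_iff_right two_ne_zero,
    add_eq_zero_iff_of_nonneg
      (sum_nonneg fun j hj => sum_nonneg fun k hk => mul_nonneg (hw₁ j hj k hk).le (sq_nonneg _))
      (sum_nonneg fun i hi => sum_nonneg fun j hj => mul_nonneg (hw₂ i hi j hj).le (sq_nonneg _)),
    sum_sum_mul_sq_eq_zero_iff hw₁, sum_sum_mul_sq_eq_zero_iff hw₂]
  simp only [mem_univ, true_implies]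

theorem gevHessQuad_eq_zero_iff {A B G : Matrix (Fin d) (Fin d) ℝ} {lam : Fin d → ℝ}
    (hGB : Gᵀ * B * G = 1) (hGA : Gᵀ * A * G = diagonal lam) {e : Fin r ↪ Fin d}
    (hgap : ∀ j, ∀ k ∉ Set.range e, lam k < lam (e j)) (hpos : ∀ i, 0 < lam (e i))
    {Ψ : Matrix (Fin r) (Fin r) ℝ} (hΨ : Ψᵀ * Ψ = 1) (V : Matrix (Fin d) (Fin r) ℝ) :
    gevHessQuad d r A B (G * (1 : Matrix (Fin d) (Fin d) ℝ).submatrix id e * Ψ) V = 0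
      ↔ ∃ S : Matrix (Fin r) (Fin r) ℝ,
          Sᵀ = -S ∧ V = G * (1 : Matrix (Fin d) (Fin d) ℝ).submatrix id e * Ψ * S := by
  obtain ⟨U, rfl⟩ : ∃ U : Matrix (Fin d) (Fin r) ℝ, V = G * U * Ψ := by
    refine ⟨Gᵀ * B * V * Ψᵀ, ?_⟩
    simp only [Matrix.mul_assoc, hΨ, Matrix.mul_one]
    rw [← Matrix.mul_assoc Gᵀ, ← Matrix.mul_assoc, mul_eq_one_comm.mp hGB, Matrix.one_mul]
  rw [gevHessQuad_mul_mul _ _ _ _ _ (mul_eq_one_comm.mp hΨ), hGB, hGA,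
    gevHessQuad_diagonal_one_eq_zero_iff hgap hpos, exists_skew_mul_conj_iff hGB hΨ]

lemma StrictAnti.lt_apply_castLEEmb {lam : Fin d → ℝ} (hlam : StrictAnti lam) (hrd : r ≤ d)
    (j : Fin r) {k : Fin d} (hk : k ∉ Set.range (Fin.castLEEmb hrd)) :
    lam k < lam (Fin.castLEEmb hrd j) := by
  refine hlam (Fin.lt_def.mpr ?_)
  by_contra! hkr
  exact hk ⟨⟨k, by simp only [Fin.coe_castLEEmb, Fin.val_castLE] at hkr; omega⟩, Fin.ext rfl⟩

end Loss

/-- If the eigenvalues of `Ã` are pairwise distinct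
(`λ̃_1 > ⋯ > λ̃_d`, i.e. `lam` is strictly antitone) and `λ̃_r > 0`, then at
`X = O^B (Λ^B)^{-1/2} O^Ã_{:,{1,…,r}} Ψ` the null space `{V : q_X(V) = 0}` of the
positive semidefinite Hessian of `ℓ` is a linear subspace of dimension `r(r−1)/2`
(equivalently `rank H_X = d·r − r(r−1)/2`), consisting exactly of the matrices
`V = X S` with `S` skew-symmetric. -/
theorem gev_stable_equilibrium_hessian_nullspace
    (d r : ℕ) (hr : 1 ≤ r) (hrd : r ≤ d)
    (A B : Matrix (Fin d) (Fin d) ℝ)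
    (OB : Matrix (Fin d) (Fin d) ℝ) (hOB : OBᵀ * OB = 1)
    (μ : Fin d → ℝ) (hμ : ∀ k, 0 < μ k)
    (hBdec : B = OB * diagonal μ * OBᵀ)
    (OA : Matrix (Fin d) (Fin d) ℝ) (hOA : OAᵀ * OA = 1)
    (lam : Fin d → ℝ) (hlam : StrictAnti lam)
    (hpos : 0 < lam ⟨r - 1, by omega⟩)
    (hAdec : diagonal (fun k => (Real.sqrt (μ k))⁻¹) * OBᵀ * A * OB *
        diagonal (fun k => (Real.sqrt (μ k))⁻¹) = OA * diagonal lam * OAᵀ)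
    (Ψ : Matrix (Fin r) (Fin r) ℝ) (hΨ : Ψᵀ * Ψ = 1)
    (X : Matrix (Fin d) (Fin r) ℝ)
    (hX : X = OB * diagonal (fun k => (Real.sqrt (μ k))⁻¹) *
        OA.submatrix id (Fin.castLE hrd) * Ψ) :
    ∃ N : Submodule ℝ (Matrix (Fin d) (Fin r) ℝ),
      (∀ V, V ∈ N ↔ gevHessQuad d r A B X V = 0) ∧
      (∀ V, V ∈ N ↔ ∃ S : Matrix (Fin r) (Fin r) ℝ, Sᵀ = -S ∧ V = X * S) ∧
      Module.finrank ℝ N = r * (r - 1) / 2 := by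
  set e := Fin.castLEEmb hrd
  set G := OB * diagonal (fun k => (√(μ k))⁻¹) * OA
  have hGB : Gᵀ * B * G = 1 := transpose_mul_mul_eq_one_of_eigendecomposition hOB hOA hμ hBdec
  have hGA : Gᵀ * A * G = diagonal lam := transpose_mul_mul_eq_diagonal_of_conj hOA hAdec
  have hXG : X = G * (1 : Matrix (Fin d) (Fin d) ℝ).submatrix id e * Ψ := by
    rw [hX, Matrix.mul_assoc _ OA, mul_submatrix_one_id]
    rfl
  have hlam_pos : ∀ i, 0 < lam (e i) := fun i =>
    hpos.trans_le <| hlam.antitone <| Fin.le_def.mpr <| by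
      simp only [e, Fin.castLEEmb_apply, Fin.val_castLE]
      omega
  have hnull := gevHessQuad_eq_zero_iff hGB hGA (fun j _ hk => hlam.lt_apply_castLEEmb hrd j hk)
    hlam_pos hΨ
  rw [← hXG] at hnull
  set N := (skewAdjointMatricesSubmodule (1 : Matrix (Fin r) (Fin r) ℝ)).map
    (mulLeftLinearMap (Fin r) ℝ X)
  have hmem : ∀ V, V ∈ N ↔ ∃ S : Matrix (Fin r) (Fin r) ℝ, Sᵀ = -S ∧ V = X * S := by
    intro V
    simp only [N, Submodule.mem_map, mem_skewAdjointMatricesSubmodule_one, mulLeftLinearMap_apply]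
    exact exists_congr fun S => and_congr_right fun _ => eq_comm
  refine ⟨N, fun V => (hmem V).trans (hnull V).symm, hmem, ?_⟩
  have hXBX : Xᵀ * B * X = 1 := hXG ▸ transpose_mul_mul_submatrix_one_eq_one hGB e hΨ
  rw [finrank_map_mulLeftLinearMap_skewAdjointMatricesSubmodule_one (L := Xᵀ * B) hXBX,
    Fintype.card_fin, Nat.choose_two_right]
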